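/- Let p be a probability distribution on ℝ^d with bounded support, mean μ = E[X], and covariance Σ = Cov(X). For t ∈ (−1,1) define W_t(y;x) = exp(−‖x − ty‖²/(2(1−t)²)), D_t(x) = E_{X~p}[W_t(X;x)], N_t(x) = E_{X~p}[X W_t(X;x)], and m_t(x) = N_t(x)/D_t(x). Then for every fixed x ∈ ℝ^d, m_0(x) = μ and (d/dt) m_t(x) |_{t=0} = Σx. -/

import Mathlib

open MeasureTheory ProbabilityTheory RealInnerProductSpace

noncomputable section

/-- The mean `μ = E_{X ~ p}[X]` of a measure `p` on `ℝ^d`. -/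
def meanVec {d : ℕ} (p : Measure (EuclideanSpace ℝ (Fin d))) : EuclideanSpace ℝ (Fin d) :=
  ∫ y, y ∂p

/-- The covariance matrix `Σ = E[(X − μ)(X − μ)^T]` of a measure `p` on `ℝ^d`. -/
def covMatrix {d : ℕ} (p : Measure (EuclideanSpace ℝ (Fin d))) :
    Matrix (Fin d) (Fin d) ℝ :=
  Matrix.of fun i j => ∫ y, (y i - meanVec p i) * (y j - meanVec p j) ∂p

/-- `W_t(y; x) = exp(−‖x − ty‖²/(2(1−t)²))`. -/
def Wt {d : ℕ} (t : ℝ) (y x : EuclideanSpace ℝ (Fin d)) : ℝ :=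
  Real.exp (-‖x - t • y‖ ^ 2 / (2 * (1 - t) ^ 2))

/-- `D_t(x) = E_{X ~ p}[W_t(X; x)]`. -/
def Dt {d : ℕ} (p : Measure (EuclideanSpace ℝ (Fin d))) (t : ℝ)
    (x : EuclideanSpace ℝ (Fin d)) : ℝ :=
  ∫ y, Wt t y x ∂p

/-- `N_t(x) = E_{X ~ p}[X · W_t(X; x)]`. -/
def Nt {d : ℕ} (p : Measure (EuclideanSpace ℝ (Fin d))) (t : ℝ)
    (x : EuclideanSpace ℝ (Fin d)) : EuclideanSpace ℝ (Fin d) :=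
  ∫ y, Wt t y x • y ∂p

/-- The denoiser `m_t(x) = N_t(x)/D_t(x)`. -/
def mtDen {d : ℕ} (p : Measure (EuclideanSpace ℝ (Fin d))) (t : ℝ)
    (x : EuclideanSpace ℝ (Fin d)) : EuclideanSpace ℝ (Fin d) :=
  (Dt p t x)⁻¹ • Nt p t x

/-! At `t = 0` the weight `W_0(y; x) = exp (-‖x‖² / 2)` does not depend on `y`, so `m_0 = μ`.
Its `t`-derivative there is `W_0 · (⟪x, y⟫ - ‖x‖²)`. Since `p` has compact support we may
differentiate under the integral, and the quotient rule gives
`m_0' = E[⟪x, X⟫ X] - ‖x‖² μ - (⟪x, μ⟫ - ‖x‖²) μ = E[⟪x, X⟫ X] - ⟪x, μ⟫ μ`,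
which is `E[⟪x, X - μ⟫ (X - μ)] = Σ x`.
-/

open RealInnerProductSpace

section ParametricIntegral

variable {α E : Type*} [TopologicalSpace α] [T2Space α] [MeasurableSpace α]
  [OpensMeasurableSpace α] [NormedAddCommGroup E]
  {p : Measure α} [IsFiniteMeasure p] {K : Set α}

theorem ContinuousOn.integrable_of_ae_mem_compact {f : α → E} (hf : ContinuousOn f K)
    (hK : IsCompact K) (hpK : ∀ᵐ y ∂p, y ∈ K) : Integrable f p := by
  simpa only [IntegrableOn, Measure.restrict_eq_self_of_ae_mem hpK] using
    hf.integrableOn_compact (μ := p) hK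

theorem hasDerivAt_integral_of_ae_mem_compact [NormedSpace ℝ E] (hK : IsCompact K)
    (hpK : ∀ᵐ y ∂p, y ∈ K) {F F' : ℝ → α → E} {t₀ ε : ℝ} (hε : 0 < ε)
    (hF : ∀ t ∈ Metric.closedBall t₀ ε, ContinuousOn (F t) K)
    (hF' : ContinuousOn (Function.uncurry F') (Metric.closedBall t₀ ε ×ˢ K))
    (hderiv : ∀ t ∈ Metric.closedBall t₀ ε, ∀ y ∈ K, HasDerivAt (F · y) (F' t y) t) :
    HasDerivAt (fun t => ∫ y, F t y ∂p) (∫ y, F' t₀ y ∂p) t₀ := by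
  obtain ⟨C, hC⟩ := ((isCompact_closedBall t₀ ε).prod hK).exists_bound_of_continuousOn hF'
  have ht₀ : t₀ ∈ Metric.closedBall t₀ ε := Metric.mem_closedBall_self hε.le
  have hF't₀ : ContinuousOn (F' t₀) K :=
    hF'.comp (continuousOn_const.prodMk continuousOn_id) fun y hy => ⟨ht₀, hy⟩
  refine (hasDerivAt_integral_of_dominated_loc_of_deriv_le (bound := fun _ => C)
    (Metric.closedBall_mem_nhds t₀ hε) ?_ ((hF t₀ ht₀).integrable_of_ae_mem_compact hK hpK)
    (hF't₀.integrable_of_ae_mem_compact hK hpK).aestronglyMeasurable ?_ (integrable_const C)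
    ?_).2
  · filter_upwards [Metric.closedBall_mem_nhds t₀ hε] with t ht
    exact ((hF t ht).integrable_of_ae_mem_compact hK hpK).aestronglyMeasurable
  · filter_upwards [hpK] with y hy t ht using hC (t, y) ⟨ht, hy⟩
  · filter_upwards [hpK] with y hy t ht using hderiv t ht y hy

end ParametricIntegral

theorem integral_inner_sub_smul_sub {E : Type*} [NormedAddCommGroup E] [InnerProductSpace ℝ E]
    [CompleteSpace E] [MeasurableSpace E] {p : Measure E} [IsProbabilityMeasure p] (x : E)
    (hint : Integrable (fun y : E => y) p) (hint₂ : Integrable (fun y => ⟪x, y⟫ • y) p) :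
    ∫ y, ⟪x, y - ∫ z, z ∂p⟫ • (y - ∫ z, z ∂p) ∂p =
      ∫ y, ⟪x, y⟫ • y ∂p - ⟪x, ∫ z, z ∂p⟫ • ∫ z, z ∂p := by
  set m := ∫ z, z ∂p
  have hexpand : ∀ y, ⟪x, y - m⟫ • (y - m) =
      ⟪x, y⟫ • y - (⟪x, y⟫ • m + ⟪x, m⟫ • y - ⟪x, m⟫ • m) :=
    fun y => by rw [inner_sub_right, sub_smul, smul_sub, smul_sub]; module
  have h₁ : Integrable (fun y => ⟪x, y⟫ • m) p := (hint.const_inner x).smul_const m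
  have h₂ : Integrable (fun y => ⟪x, m⟫ • y) p := hint.smul ⟪x, m⟫
  have h₁₂ : Integrable (fun y => ⟪x, y⟫ • m + ⟪x, m⟫ • y) p := h₁.add h₂
  have h₃ : Integrable (fun y => ⟪x, y⟫ • m + ⟪x, m⟫ • y - ⟪x, m⟫ • m) p :=
    h₁₂.sub (integrable_const _)
  simp_rw [hexpand]
  rw [integral_sub hint₂ h₃, integral_sub h₁₂ (integrable_const _), integral_add h₁ h₂,
    integral_smul_const, integral_smul, integral_inner hint, integral_const]
  simp [m]

section Denoiser

variable {d : ℕ} {p : Measure (EuclideanSpace ℝ (Fin d))} {K : Set (EuclideanSpace ℝ (Fin d))}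

theorem toEuclideanLin_covMatrix [IsFiniteMeasure p] (hK : IsCompact K) (hpK : ∀ᵐ y ∂p, y ∈ K)
    (x : EuclideanSpace ℝ (Fin d)) :
    Matrix.toEuclideanLin (covMatrix p) x =
      ∫ y, ⟪x, y - meanVec p⟫ • (y - meanVec p) ∂p := by
  have hint : ∀ f : EuclideanSpace ℝ (Fin d) → ℝ, Continuous f → Integrable f p :=
    fun f hf => hf.continuousOn.integrable_of_ae_mem_compact hK hpK
  ext i
  rw [eval_integral_piLp fun j => hint _ (by fun_prop)]
  simp only [Matrix.toLpLin_apply, Matrix.mulVec, dotProduct, covMatrix, Matrix.of_apply,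
    PiLp.toLp_apply, ← integral_mul_const]
  rw [← integral_finsetSum _ fun j _ => hint _ (by fun_prop)]
  congr 1 with y
  simp only [PiLp.smul_apply, PiLp.sub_apply, PiLp.inner_apply, smul_eq_mul, Finset.sum_mul]
  refine Finset.sum_congr rfl fun j _ => ?_
  simp only [RCLike.inner_apply, conj_trivial]
  ring

def WtDeriv (t : ℝ) (y x : EuclideanSpace ℝ (Fin d)) : ℝ :=
  Wt t y x * (⟪x - t • y, y⟫ / (1 - t) ^ 2 - ‖x - t • y‖ ^ 2 / (1 - t) ^ 3)

theorem hasDerivAt_Wt {t : ℝ} (ht : t ≠ 1) (y x : EuclideanSpace ℝ (Fin d)) :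
    HasDerivAt (fun s => Wt s y x) (WtDeriv t y x) t := by
  have h1t : 1 - t ≠ 0 := sub_ne_zero.2 ht.symm
  have hnum : HasDerivAt (fun s : ℝ => ‖x - s • y‖ ^ 2) (2 * ⟪x - t • y, -y⟫) t :=
    ((hasDerivAt_const t x).sub ((hasDerivAt_id t).smul_const y)).norm_sq |>.congr_deriv (by simp)
  have hden : HasDerivAt (fun s : ℝ => 2 * (1 - s) ^ 2) (2 * (2 * (1 - t) * -1)) t := by
    simpa using (((hasDerivAt_const t (1 : ℝ)).sub (hasDerivAt_id t)).pow 2).const_mul 2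
  refine HasDerivAt.congr_deriv (f := fun s => Wt s y x)
    (hnum.neg.div hden (by positivity)).exp ?_
  simp only [WtDeriv, Wt, Pi.neg_apply, Pi.div_apply, inner_neg_right]
  field_simp

theorem continuous_Wt (t : ℝ) (x : EuclideanSpace ℝ (Fin d)) : Continuous (Wt t · x) := by
  unfold Wt
  fun_prop

theorem continuousOn_WtDeriv (x : EuclideanSpace ℝ (Fin d)) :
    ContinuousOn (Function.uncurry fun t y => WtDeriv t y x) {q | q.1 ≠ 1} := by
  simp only [Function.uncurry_def, WtDeriv, Wt]
  fun_prop (disch := intro q hq; have : 1 - q.1 ≠ 0 := sub_ne_zero.2 (Ne.symm hq); positivity)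

theorem Wt_zero (y x : EuclideanSpace ℝ (Fin d)) : Wt 0 y x = Real.exp (-‖x‖ ^ 2 / 2) := by
  simp [Wt]

theorem WtDeriv_zero (y x : EuclideanSpace ℝ (Fin d)) :
    WtDeriv 0 y x = Real.exp (-‖x‖ ^ 2 / 2) * (⟪x, y⟫ - ‖x‖ ^ 2) := by
  simp [WtDeriv, Wt_zero]

theorem hasDerivAt_integral_Wt_smul {F : Type*} [NormedAddCommGroup F] [NormedSpace ℝ F]
    [IsFiniteMeasure p] (hK : IsCompact K) (hpK : ∀ᵐ y ∂p, y ∈ K)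
    {g : EuclideanSpace ℝ (Fin d) → F} (hg : Continuous g) (x : EuclideanSpace ℝ (Fin d)) :
    HasDerivAt (fun t => ∫ y, Wt t y x • g y ∂p) (∫ y, WtDeriv 0 y x • g y ∂p) 0 := by
  have hne : ∀ t ∈ Metric.closedBall (0 : ℝ) (1 / 2), t ≠ 1 := by
    intro t ht h
    norm_num [h] at ht
  refine hasDerivAt_integral_of_ae_mem_compact hK hpK one_half_pos
    (fun t _ => ((continuous_Wt t x).smul hg).continuousOn) ?_
    fun t ht y _ => (hasDerivAt_Wt (hne t ht) y x).smul_const (g y)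
  exact ((continuousOn_WtDeriv x).mono fun q hq => hne q.1 hq.1).smul
    (hg.comp continuous_snd).continuousOn

theorem Dt_zero [IsProbabilityMeasure p] (x : EuclideanSpace ℝ (Fin d)) :
    Dt p 0 x = Real.exp (-‖x‖ ^ 2 / 2) := by
  simp [Dt, Wt_zero]

theorem Nt_zero (x : EuclideanSpace ℝ (Fin d)) :
    Nt p 0 x = Real.exp (-‖x‖ ^ 2 / 2) • meanVec p := by
  simp only [Nt, Wt_zero]
  rw [integral_smul, meanVec]

theorem mtDen_zero [IsProbabilityMeasure p] (x : EuclideanSpace ℝ (Fin d)) :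
    mtDen p 0 x = meanVec p := by
  rw [mtDen, Dt_zero, Nt_zero, inv_smul_smul₀ (Real.exp_pos _).ne']

theorem hasDerivAt_Dt_zero [IsProbabilityMeasure p] (hK : IsCompact K) (hpK : ∀ᵐ y ∂p, y ∈ K)
    (x : EuclideanSpace ℝ (Fin d)) :
    HasDerivAt (Dt p · x) (Real.exp (-‖x‖ ^ 2 / 2) * (⟪x, meanVec p⟫ - ‖x‖ ^ 2)) 0 := by
  have hint : Integrable (fun y : EuclideanSpace ℝ (Fin d) => y) p :=
    continuous_id.continuousOn.integrable_of_ae_mem_compact hK hpK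
  have h := hasDerivAt_integral_Wt_smul hK hpK (g := fun _ => (1 : ℝ)) continuous_const x
  simp only [smul_eq_mul, mul_one, WtDeriv_zero] at h
  refine h.congr_deriv ?_
  rw [integral_const_mul, integral_sub (hint.const_inner x) (integrable_const _),
    integral_inner hint]
  simp [meanVec]

theorem hasDerivAt_Nt_zero [IsFiniteMeasure p] (hK : IsCompact K) (hpK : ∀ᵐ y ∂p, y ∈ K)
    (x : EuclideanSpace ℝ (Fin d)) :
    HasDerivAt (Nt p · x)
      (Real.exp (-‖x‖ ^ 2 / 2) • (∫ y, ⟪x, y⟫ • y ∂p - ‖x‖ ^ 2 • meanVec p)) 0 := by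
  have hint : Integrable (fun y : EuclideanSpace ℝ (Fin d) => ‖x‖ ^ 2 • y) p :=
    (by fun_prop : Continuous _).continuousOn.integrable_of_ae_mem_compact hK hpK
  have hint₂ : Integrable (fun y : EuclideanSpace ℝ (Fin d) => ⟪x, y⟫ • y) p :=
    (by fun_prop : Continuous _).continuousOn.integrable_of_ae_mem_compact hK hpK
  refine (hasDerivAt_integral_Wt_smul hK hpK continuous_id x).congr_deriv ?_
  simp only [WtDeriv_zero, mul_smul, sub_smul, id]
  rw [integral_smul, integral_sub hint₂ hint, integral_smul, meanVec]

theorem hasDerivAt_mtDen_zero [IsProbabilityMeasure p] (hK : IsCompact K)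
    (hpK : ∀ᵐ y ∂p, y ∈ K) (x : EuclideanSpace ℝ (Fin d)) :
    HasDerivAt (mtDen p · x) (∫ y, ⟪x, y⟫ • y ∂p - ⟪x, meanVec p⟫ • meanVec p) 0 := by
  have hc : Real.exp (-‖x‖ ^ 2 / 2) ≠ 0 := (Real.exp_pos _).ne'
  have h := ((hasDerivAt_Dt_zero hK hpK x).inv (by rw [Dt_zero]; exact hc)).smul
    (hasDerivAt_Nt_zero hK hpK x)
  refine h.congr_deriv ?_
  rw [Pi.inv_apply, Dt_zero, Nt_zero, smul_smul, smul_smul, inv_mul_cancel₀ hc, one_smul]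
  field_simp
  module

end Denoiser

theorem denoiser_first_two_coefficients_general {d : ℕ} (R : ℝ)
    (p : Measure (EuclideanSpace ℝ (Fin d))) [IsProbabilityMeasure p]
    (hsupp : p (Metric.ball (0 : EuclideanSpace ℝ (Fin d)) R)ᶜ = 0)
    (x : EuclideanSpace ℝ (Fin d)) :
    mtDen p 0 x = meanVec p ∧
    deriv (fun t => mtDen p t x) 0 = Matrix.toEuclideanLin (covMatrix p) x := by
  have hK := isCompact_closedBall (0 : EuclideanSpace ℝ (Fin d)) R
  have hpK : ∀ᵐ y ∂p, y ∈ Metric.closedBall 0 R :=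
    Filter.mem_of_superset (mem_ae_iff.2 hsupp) Metric.ball_subset_closedBall
  have hint : Integrable (fun y : EuclideanSpace ℝ (Fin d) => y) p :=
    continuous_id.continuousOn.integrable_of_ae_mem_compact hK hpK
  have hint₂ : Integrable (fun y : EuclideanSpace ℝ (Fin d) => ⟪x, y⟫ • y) p :=
    (by fun_prop : Continuous _).continuousOn.integrable_of_ae_mem_compact hK hpK
  refine ⟨mtDen_zero x, ?_⟩
  rw [(hasDerivAt_mtDen_zero hK hpK x).deriv, toEuclideanLin_covMatrix hK hpK, meanVec,
    integral_inner_sub_smul_sub x hint hint₂]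

/-- for `p` with bounded support (contained in some ball `B_R(0)`), mean `μ`, and
covariance `Σ`, for every fixed `x`, `m_0(x) = μ` and `(d/dt) m_t(x)|_{t=0} = Σx`. -/
theorem denoiser_first_two_coefficients {d : ℕ} (R : ℝ) (hR : 0 < R)
    (p : Measure (EuclideanSpace ℝ (Fin d))) [IsProbabilityMeasure p]
    (hsupp : p (Metric.ball (0 : EuclideanSpace ℝ (Fin d)) R)ᶜ = 0)
    (x : EuclideanSpace ℝ (Fin d)) :
    mtDen p 0 x = meanVec p ∧
    deriv (fun t => mtDen p t x) 0 = Matrix.toEuclideanLin (covMatrix p) x :=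
  denoiser_first_two_coefficients_general R p hsupp x

end
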